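/- arXiv:2506.15412 — 2 statements merged into one kernel-verified Lean document; each statement's English description precedes it below -/
import Mathlib

section
/- Let K ≥ 2, let c be an index in {1,…,K}, let α ∈ ℝ, and let p ∈ ℝ^K satisfy Σ_{k=1}^K p(k) = 1. Define ε = 1 − p(c) and the label-smoothed target y′ ∈ ℝ^K by y′(c) = 1 − α and y′(k) = α/(K−1) for k ≠ c. Then Σ_{k=1}^K (p(k) − y′(k))² ≥ (α − ε)² · K/(K−1); equivalently, ‖p − y′‖₂ ≥ |α − ε| · √(K/(K−1)). -/
/-!
Write `d = p − y'`. Both `p` and `y'` sum to one, so `d` sums to zero and the off-class entries of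
`d` sum to `−d c = ε − α`. Cauchy–Schwarz over those `K − 1` entries gives
`(α − ε)² ≤ (K − 1) · Σ_{k ≠ c} d k²`, and adding `(K − 1) · d c²` yields
`K · (α − ε)² ≤ (K − 1) · ‖d‖²`.
-/

open Finset

section

variable {ι : Type*} [Fintype ι] [DecidableEq ι]

lemma cast_card_compl_singleton (c : ι) :
    ((#({c}ᶜ : Finset ι) : ℕ) : ℝ) = Fintype.card ι - 1 := by
  rw [card_compl, card_singleton, Nat.cast_sub (Fintype.card_pos_iff.2 ⟨c⟩), Nat.cast_one]

lemma sum_eq_one_of_labelSmoothing {c : ι} {α : ℝ} {y : ι → ℝ} (hcard : Fintype.card ι ≠ 1)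
    (hc : y c = 1 - α) (hy : ∀ k ≠ c, y k = α / (Fintype.card ι - 1)) :
    ∑ k, y k = 1 := by
  have hcard' : (Fintype.card ι : ℝ) - 1 ≠ 0 := sub_ne_zero.2 (by exact_mod_cast hcard)
  rw [Fintype.sum_eq_add_sum_compl c, hc,
    sum_congr rfl fun k hk => hy k (by simpa using hk), sum_const, nsmul_eq_mul,
    cast_card_compl_singleton, mul_div_cancel₀ _ hcard']
  ring

lemma sq_apply_mul_card_le_of_sum_eq_zero {d : ι → ℝ} (hd : ∑ k, d k = 0) (c : ι) :
    d c ^ 2 * Fintype.card ι ≤ (Fintype.card ι - 1) * ∑ k, d k ^ 2 := by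
  have hoff : ∑ k ∈ {c}ᶜ, d k = -d c := by
    rw [Fintype.sum_eq_add_sum_compl c] at hd
    linarith
  have hcs : d c ^ 2 ≤ (Fintype.card ι - 1) * ∑ k ∈ {c}ᶜ, d k ^ 2 := by
    simpa [hoff, cast_card_compl_singleton] using
      sq_sum_le_card_mul_sum_sq (s := ({c}ᶜ : Finset ι)) (f := d)
  rw [Fintype.sum_eq_add_sum_compl c]
  linarith

end

/-- Logit-residual norm lower bound under label smoothing (Appendix F, Eq. (F3)):
with `Σ p k = 1`, `ε = 1 − p c`, and smoothed target `y'` (`y' c = 1 − α`,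
`y' k = α/(K−1)` for `k ≠ c`), one has
`Σ_k (p k − y' k)² ≥ (α − ε)² · K/(K−1)`. -/
theorem label_smoothing_residual_lower_bound
    (K : ℕ) (hK : 2 ≤ K) (c : Fin K) (α : ℝ)
    (p : Fin K → ℝ) (hp : ∑ k, p k = 1)
    (ε : ℝ) (hε : ε = 1 - p c)
    (y' : Fin K → ℝ)
    (hy'c : y' c = 1 - α)
    (hy' : ∀ k ≠ c, y' k = α / ((K : ℝ) - 1)) :
    (α - ε) ^ 2 * ((K : ℝ) / ((K : ℝ) - 1)) ≤ ∑ k, (p k - y' k) ^ 2 := by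
  have hy'_sum : ∑ k, y' k = 1 :=
    sum_eq_one_of_labelSmoothing (by rw [Fintype.card_fin]; omega) hy'c (by simpa using hy')
  have hd : ∑ k, (p k - y' k) = 0 := by rw [sum_sub_distrib, hp, hy'_sum, sub_self]
  have key := sq_apply_mul_card_le_of_sum_eq_zero hd c
  rw [Fintype.card_fin, hy'c, show p c - (1 - α) = α - ε by rw [hε]; ring] at key
  have hK1 : (0 : ℝ) ≤ K - 1 := by
    rw [sub_nonneg]
    exact_mod_cast one_le_two.trans hK
  rw [← mul_div_assoc]
  exact div_le_of_le_mul₀ hK1 (by positivity) (by linarith)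
end

section
/- Let K ≥ 2, let J be a real K×d matrix whose associated linear map u ↦ J·u is surjective onto ℝ^K (full row rank), and let λ > 0 be such that every eigenvalue of J·Jᵀ is either 0 or at least λ. Let c be an index in {1,…,K}, let α ∈ ℝ, let p ∈ ℝ^K satisfy Σ_{k=1}^K p(k) = 1, set ε = 1 − p(c), and suppose ε < α. With the label-smoothed target y′ given by y′(c) = 1 − α and y′(k) = α/(K−1) for k ≠ c, one has ‖Jᵀ·(p − y′)‖₂² ≥ λ·(α − ε)²·K/(K−1). -/
/-! Full row rank makes `J Jᵀ` invertible, so the eigenvalue gap puts its whole spectrum in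
`[λ, ∞)` and `‖Jᵀ v‖² = vᵀ (J Jᵀ) v ≥ λ ‖v‖²`. The residual `v = p − y'` sums to zero, so the
off-target coordinates sum to `−v c = ε − α`, and Cauchy–Schwarz on those `K − 1` coordinates
gives `‖v‖² ≥ v c² + v c² / (K − 1) = (α − ε)² K / (K − 1)`. -/

open Matrix Finset

namespace Matrix

variable {n : Type*} [Fintype n]

theorem IsHermitian.posSemidef_sub_smul_one [DecidableEq n] {A : Matrix n n ℝ}
    (hA : A.IsHermitian) {r : ℝ} (hr : ∀ μ ∈ spectrum ℝ A, r ≤ μ) : (A - r • 1).PosSemidef := by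
  refine posSemidef_iff_isHermitian_and_spectrum_nonneg.mpr
    ⟨hA.sub (isHermitian_one.smul (IsSelfAdjoint.all r)), ?_⟩
  rw [← Algebra.algebraMap_eq_smul_one, ← spectrum.sub_singleton_eq]
  rintro _ ⟨μ, hμ, _, rfl, rfl⟩
  exact sub_nonneg.mpr (hr μ hμ)

theorem IsHermitian.mul_dotProduct_self_le_dotProduct_mulVec [DecidableEq n] {A : Matrix n n ℝ}
    (hA : A.IsHermitian) {r : ℝ} (hr : ∀ μ ∈ spectrum ℝ A, r ≤ μ) (v : n → ℝ) :
    r * (v ⬝ᵥ v) ≤ v ⬝ᵥ (A *ᵥ v) := by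
  have := (hA.posSemidef_sub_smul_one hr).dotProduct_mulVec_nonneg v
  simp only [star_trivial, sub_mulVec, smul_mulVec, one_mulVec, dotProduct_sub,
    dotProduct_smul, smul_eq_mul] at this
  linarith

theorem isUnit_mul_transpose_self_of_surjective {m R : Type*} [Fintype m] [DecidableEq m]
    [Field R] [LinearOrder R] [IsStrictOrderedRing R] {J : Matrix m n R}
    (hJ : Function.Surjective J.mulVecLin) : IsUnit (J * Jᵀ) := by
  have hrank : (J * Jᵀ).rank = Fintype.card m := by
    rw [rank_self_mul_transpose, rank, LinearMap.range_eq_top.mpr hJ, finrank_top,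
      Module.finrank_fintype_fun_eq_card]
  have hrange : LinearMap.range (J * Jᵀ).mulVecLin = ⊤ :=
    Submodule.eq_top_of_finrank_eq (hrank.trans (Module.finrank_fintype_fun_eq_card R).symm)
  exact mulVec_surjective_iff_isUnit.mp (LinearMap.range_eq_top.mp hrange)

end Matrix

theorem sq_mul_card_div_le_dotProduct_self {ι R : Type*} [Fintype ι] [Field R] [LinearOrder R]
    [IsStrictOrderedRing R] {v : ι → R} (hv : ∑ k, v k = 0) (c : ι) :
    v c ^ 2 * (Fintype.card ι / (Fintype.card ι - 1)) ≤ v ⬝ᵥ v := by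
  classical
  have hrest : ∑ k ∈ univ.erase c, v k = - v c := by
    rw [← add_sum_erase univ v (mem_univ c)] at hv
    linarith
  have hcard : 1 ≤ Fintype.card ι := Fintype.card_pos_iff.mpr ⟨c⟩
  have hcs : v c ^ 2 ≤ ((Fintype.card ι : R) - 1) * ∑ k ∈ univ.erase c, v k ^ 2 := by
    have := sq_sum_le_card_mul_sum_sq (s := univ.erase c) (f := v)
    rwa [hrest, neg_sq, card_erase_of_mem (mem_univ c), card_univ, Nat.cast_sub hcard,
      Nat.cast_one] at this
  have hdot : v ⬝ᵥ v = v c ^ 2 + ∑ k ∈ univ.erase c, v k ^ 2 := by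
    simp only [dotProduct, ← sq, add_sum_erase univ (fun k => v k ^ 2) (mem_univ c)]
  rw [hdot, ← mul_div_assoc]
  refine div_le_of_le_mul₀ (by simpa using hcard) (by positivity) ?_
  linarith

theorem sum_eq_one_of_label_smoothing {K : ℕ} (hK : 2 ≤ K) {c : Fin K} {α : ℝ} {y' : Fin K → ℝ}
    (hy'c : y' c = 1 - α) (hy' : ∀ k ≠ c, y' k = α / ((K : ℝ) - 1)) : ∑ k, y' k = 1 := by
  have hK1 : (K : ℝ) - 1 ≠ 0 := by
    have : (2 : ℝ) ≤ K := by exact_mod_cast hK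
    linarith
  rw [← add_sum_erase univ y' (mem_univ c), sum_congr rfl fun k hk => hy' k (ne_of_mem_erase hk),
    sum_const, card_erase_of_mem (mem_univ c), card_univ, Fintype.card_fin, nsmul_eq_mul,
    Nat.cast_sub (by omega), hy'c, Nat.cast_one, mul_div_cancel₀ _ hK1]
  ring

theorem feature_gradient_lower_bound_overconfident_general
    (K d : ℕ) (hK : 2 ≤ K)
    (J : Matrix (Fin K) (Fin d) ℝ)
    (hsurj : Function.Surjective J.mulVecLin)
    (lam : ℝ) (hlam : 0 < lam)
    (heig : ∀ μ ∈ spectrum ℝ (J * Jᵀ), μ = 0 ∨ lam ≤ μ)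
    (c : Fin K) (α : ℝ)
    (p : Fin K → ℝ) (hp : ∑ k, p k = 1)
    (ε : ℝ) (hε : ε = 1 - p c)
    (y' : Fin K → ℝ)
    (hy'c : y' c = 1 - α)
    (hy' : ∀ k ≠ c, y' k = α / ((K : ℝ) - 1)) :
    lam * (α - ε) ^ 2 * ((K : ℝ) / ((K : ℝ) - 1)) ≤
      (Jᵀ *ᵥ (p - y')) ⬝ᵥ (Jᵀ *ᵥ (p - y')) := by
  have hA : (J * Jᵀ).IsHermitian := by
    simpa using isHermitian_mul_conjTranspose_self J
  have hspec : ∀ μ ∈ spectrum ℝ (J * Jᵀ), lam ≤ μ := fun μ hμ =>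
    (heig μ hμ).resolve_left <| by
      rintro rfl
      exact (spectrum.zero_mem_iff ℝ).mp hμ (isUnit_mul_transpose_self_of_surjective hsurj)
  have hsum : ∑ k, (p - y') k = 0 := by
    simp [sum_sub_distrib, hp, sum_eq_one_of_label_smoothing hK hy'c hy']
  have hc : (p - y') c = α - ε := by
    rw [Pi.sub_apply, hy'c, hε]
    ring
  calc lam * (α - ε) ^ 2 * ((K : ℝ) / ((K : ℝ) - 1))
      = lam * ((p - y') c ^ 2 * (Fintype.card (Fin K) / (Fintype.card (Fin K) - 1))) := by
        rw [hc, Fintype.card_fin]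
        ring
    _ ≤ lam * ((p - y') ⬝ᵥ (p - y')) :=
        mul_le_mul_of_nonneg_left (sq_mul_card_div_le_dotProduct_self hsum c) hlam.le
    _ ≤ (p - y') ⬝ᵥ ((J * Jᵀ) *ᵥ (p - y')) :=
        hA.mul_dotProduct_self_le_dotProduct_mulVec hspec _
    _ = (Jᵀ *ᵥ (p - y')) ⬝ᵥ (Jᵀ *ᵥ (p - y')) := by
        rw [← mulVec_mulVec, dotProduct_mulVec, mulVec_transpose]

/-- Explicit non-vanishing feature-gradient lower bound in the over-confident regime
(Appendix F, Eq. (F4_eps), full-row-rank form): if `J` has full row rank, every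
eigenvalue of `J·Jᵀ` is `0` or at least `lam > 0`, `Σ p k = 1`, `ε = 1 − p c < α`,
and `y'` is the label-smoothed target, then
`‖Jᵀ(p − y')‖₂² ≥ lam·(α − ε)²·K/(K−1)` (squared norm written as a dot product). -/
theorem feature_gradient_lower_bound_overconfident
    (K d : ℕ) (hK : 2 ≤ K)
    (J : Matrix (Fin K) (Fin d) ℝ)
    (hsurj : Function.Surjective J.mulVecLin)
    (lam : ℝ) (hlam : 0 < lam)
    (heig : ∀ μ ∈ spectrum ℝ (J * Jᵀ), μ = 0 ∨ lam ≤ μ)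
    (c : Fin K) (α : ℝ)
    (p : Fin K → ℝ) (hp : ∑ k, p k = 1)
    (ε : ℝ) (hε : ε = 1 - p c) (hover : ε < α)
    (y' : Fin K → ℝ)
    (hy'c : y' c = 1 - α)
    (hy' : ∀ k ≠ c, y' k = α / ((K : ℝ) - 1)) :
    lam * (α - ε) ^ 2 * ((K : ℝ) / ((K : ℝ) - 1)) ≤
      (Jᵀ *ᵥ (p - y')) ⬝ᵥ (Jᵀ *ᵥ (p - y')) :=
  feature_gradient_lower_bound_overconfident_general K d hK J hsurj lam hlam heig c α p hp ε hε y'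
    hy'c hy'
end
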